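/- Let Z be a real s×s matrix, set S_t := exp(tZ), and let ψ₀ be the Lévy symbol associated to α ∈ ℝ^s, a real symmetric positive semidefinite s×s matrix A, and a Lévy measure ν on ℝ^s. Suppose for each t ≥ 0 that Q_t is a probability measure on ℝ^s with charFun(Q_t)(k) = exp( ∫₀ᵗ ψ₀(S_τ k) dτ ) for all k, and define the transition probability P_t(·|x), for x ∈ ℝ^s, as the pushforward of Q_t under the translation y ↦ y + S_tᵀ x. Then the Chapman–Kolmogorov identity holds: for all t, r ≥ 0, all x ∈ ℝ^s, and every Borel set C ⊆ ℝ^s, ∫_{ℝ^s} P_t(C|y) P_r(dy|x) = P_{t+r}(C|x). -/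

import Mathlib

open MeasureTheory Matrix Filter ComplexOrder

/-- The matrix semigroup `S_t = exp (t Z)` generated by a real `d × d` matrix `Z`. -/
noncomputable def expm {d : ℕ} (Z : Matrix (Fin d) (Fin d) ℝ) (t : ℝ) :
    Matrix (Fin d) (Fin d) ℝ :=
  NormedSpace.exp (t • Z)

/-- The Euclidean norm on `ℝ^d`. -/
noncomputable def eucNorm {d : ℕ} (x : Fin d → ℝ) : ℝ :=
  Real.sqrt (∑ i, x i ^ 2)

/-- The characteristic function of a measure on `ℝ^d`. -/
noncomputable def charFun {d : ℕ} (μ : Measure (Fin d → ℝ)) (ξ : Fin d → ℝ) : ℂ :=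
  ∫ x, Complex.exp (Complex.I * ((x ⬝ᵥ ξ : ℝ) : ℂ)) ∂μ

/-- Convolution of two measures on `ℝ^d`. -/
noncomputable def mconv {d : ℕ} (μ ρ : Measure (Fin d → ℝ)) : Measure (Fin d → ℝ) :=
  (μ.prod ρ).map fun p => p.1 + p.2

/-- The `m`-fold convolution power of a measure on `ℝ^d`. -/
noncomputable def convPow {d : ℕ} (ρ : Measure (Fin d → ℝ)) : ℕ → Measure (Fin d → ℝ)
  | 0 => Measure.dirac 0
  | n + 1 => mconv ρ (convPow ρ n)

/-- A probability measure on `ℝ^d` is infinitely divisible if for every `m ≥ 1` it is an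
`m`-fold convolution power of some probability measure. -/
def InfinitelyDivisible {d : ℕ} (μ : Measure (Fin d → ℝ)) : Prop :=
  ∀ m : ℕ, 1 ≤ m → ∃ ρ : Measure (Fin d → ℝ), IsProbabilityMeasure ρ ∧ convPow ρ m = μ

/-- `g : ℝ^d → ℂ` is twisted positive definite with respect to the antisymmetric form `Δ`. -/
def TwistedPosDef {d : ℕ} (Δ : Matrix (Fin d) (Fin d) ℝ) (g : (Fin d → ℝ) → ℂ) : Prop :=
  ∀ (N : ℕ) (ξ : Fin N → (Fin d → ℝ)) (c : Fin N → ℂ),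
    0 ≤ ∑ k : Fin N, ∑ l : Fin N, (starRingEnd ℂ) (c k) * g (ξ l - ξ k) *
      Complex.exp (Complex.I / 2 * (((ξ k) ⬝ᵥ (Δ.mulVec (ξ l)) : ℝ) : ℂ)) * c l

/-- A Lévy measure on `ℝ^d`. -/
def IsLevyMeasure {d : ℕ} (ν : Measure (Fin d → ℝ)) : Prop :=
  ν {0} = 0 ∧
  (∫⁻ η in {η : Fin d → ℝ | eucNorm η < 1}, ENNReal.ofReal (eucNorm η ^ 2) ∂ν) < ⊤ ∧
  ν {η : Fin d → ℝ | 1 ≤ eucNorm η} < ⊤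

/-- The Lévy symbol associated to a generating triplet `(A, ν, α)`. -/
noncomputable def levySymbol {d : ℕ} (α : Fin d → ℝ) (A : Matrix (Fin d) (Fin d) ℝ)
    (ν : Measure (Fin d → ℝ)) (ξ : Fin d → ℝ) : ℂ :=
  Complex.I * ((α ⬝ᵥ ξ : ℝ) : ℂ) - (1 / 2 : ℂ) * ((ξ ⬝ᵥ (A.mulVec ξ) : ℝ) : ℂ) +
    ∫ η, (Complex.exp (Complex.I * ((η ⬝ᵥ ξ : ℝ) : ℂ)) - 1 -
      Complex.I * ((({η : Fin d → ℝ | eucNorm η < 1}).indicator (fun η' => η' ⬝ᵥ ξ) η : ℝ) : ℂ)) ∂ν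

/-- `Ψ` admits the Lévy–Khinchine representation with generating triplet `(A, ν, α)`. -/
def HasTriplet {d : ℕ} (Ψ : (Fin d → ℝ) → ℂ) (A : Matrix (Fin d) (Fin d) ℝ)
    (ν : Measure (Fin d → ℝ)) (α : Fin d → ℝ) : Prop :=
  A.IsSymm ∧ A.PosSemidef ∧ ν {0} = 0 ∧
  (∫⁻ η, ENNReal.ofReal (min (eucNorm η ^ 2) 1) ∂ν) < ⊤ ∧
  ∀ ξ, Ψ ξ = levySymbol α A ν ξ

/-!
Via characteristic functions, `Q_{t+r} = Q_t ∗ (S_tᵀ)_* Q_r`: the exponent `∫₀^{t+r} ψ₀(S_τ k) dτ`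
splits at `t`, and since `S_{τ+t} = S_τ S_t` the piece `∫ₜ^{t+r}` is the exponent of `Q_r` at
`S_t k`. The splitting is legitimate because the Lévy measure makes `ψ₀` continuous (dominated
convergence with the bound `min (|η|², 1)`). Unfolding `P` and using `S_tᵀ S_rᵀ = S_{t+r}ᵀ`, both
sides of the Chapman–Kolmogorov identity become the mass this convolution gives to `C - S_{t+r}ᵀ x`.
-/

section

variable {d : ℕ}

lemma eucNorm_eq_norm_toLp (x : Fin d → ℝ) : eucNorm x = ‖WithLp.toLp 2 x‖ := by
  simp [eucNorm, EuclideanSpace.norm_eq]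

lemma eucNorm_nonneg (x : Fin d → ℝ) : 0 ≤ eucNorm x := Real.sqrt_nonneg _

lemma continuous_eucNorm : Continuous (eucNorm : (Fin d → ℝ) → ℝ) := by
  simp_rw [funext eucNorm_eq_norm_toLp]
  fun_prop

lemma measurableSet_eucNorm_lt_one : MeasurableSet {η : Fin d → ℝ | eucNorm η < 1} :=
  measurableSet_lt continuous_eucNorm.measurable measurable_const

lemma abs_dotProduct_le_eucNorm_mul (x y : Fin d → ℝ) : |x ⬝ᵥ y| ≤ eucNorm x * eucNorm y := by
  have h : x ⬝ᵥ y = inner ℝ (WithLp.toLp 2 x) (WithLp.toLp 2 y) := by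
    simp [PiLp.inner_apply, dotProduct, mul_comm]
  rw [h, eucNorm_eq_norm_toLp, eucNorm_eq_norm_toLp]
  exact abs_real_inner_le_norm _ _

lemma norm_cexp_I_mul_sub_one_sub_le (a : ℝ) :
    ‖Complex.exp (Complex.I * a) - 1 - Complex.I * a‖ ≤ 2 * a ^ 2 := by
  have hIa : ‖Complex.I * a‖ = |a| := by simp
  rcases le_or_gt |a| 1 with ha | ha
  · calc _ ≤ ‖Complex.I * a‖ ^ 2 := Complex.norm_exp_sub_one_sub_id_le (by rwa [hIa])
      _ ≤ 2 * a ^ 2 := by rw [hIa, sq_abs]; nlinarith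
  · calc _ ≤ ‖Complex.exp (Complex.I * a) - 1‖ + ‖Complex.I * a‖ := norm_sub_le _ _
      _ ≤ |a| + |a| := by rw [hIa]; gcongr; exact Real.norm_exp_I_mul_ofReal_sub_one_le
      _ ≤ 2 * a ^ 2 := by nlinarith [sq_abs a]

lemma norm_cexp_I_mul_sub_one_le_two (a : ℝ) : ‖Complex.exp (Complex.I * a) - 1‖ ≤ 2 :=
  (norm_sub_le _ _).trans (by simp [Complex.norm_exp_I_mul_ofReal]; norm_num)

noncomputable def levyIntegrand (ξ η : Fin d → ℝ) : ℂ :=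
  Complex.exp (Complex.I * ((η ⬝ᵥ ξ : ℝ) : ℂ)) - 1 -
    Complex.I * ((({η : Fin d → ℝ | eucNorm η < 1}).indicator (fun η' => η' ⬝ᵥ ξ) η : ℝ) : ℂ)

lemma levySymbol_eq (α : Fin d → ℝ) (A : Matrix (Fin d) (Fin d) ℝ) (ν : Measure (Fin d → ℝ))
    (ξ : Fin d → ℝ) :
    levySymbol α A ν ξ = Complex.I * ((α ⬝ᵥ ξ : ℝ) : ℂ) -
      (1 / 2 : ℂ) * ((ξ ⬝ᵥ (A.mulVec ξ) : ℝ) : ℂ) + ∫ η, levyIntegrand ξ η ∂ν :=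
  rfl

lemma norm_levyIntegrand_le (ξ η : Fin d → ℝ) :
    ‖levyIntegrand ξ η‖ ≤ 2 * (eucNorm ξ ^ 2 + 1) * min (eucNorm η ^ 2) 1 := by
  have hξ := eucNorm_nonneg ξ
  have hη := eucNorm_nonneg η
  simp only [levyIntegrand, Set.indicator_apply, Set.mem_ofPred_eq]
  by_cases hsmall : eucNorm η < 1
  · rw [if_pos hsmall, min_eq_left (by nlinarith)]
    have hdot := abs_dotProduct_le_eucNorm_mul η ξ
    have hsq : (η ⬝ᵥ ξ) ^ 2 ≤ (eucNorm η * eucNorm ξ) ^ 2 :=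
      sq_le_sq' (by linarith [neg_abs_le (η ⬝ᵥ ξ)]) (le_of_abs_le hdot)
    calc _ ≤ 2 * (η ⬝ᵥ ξ) ^ 2 := norm_cexp_I_mul_sub_one_sub_le _
      _ ≤ _ := by nlinarith [sq_nonneg (eucNorm η)]
  · rw [if_neg hsmall, min_eq_right (by nlinarith)]
    simp only [Complex.ofReal_zero, mul_zero, sub_zero]
    calc _ ≤ 2 := norm_cexp_I_mul_sub_one_le_two _
      _ ≤ _ := by nlinarith

lemma measurable_levyIntegrand (ξ : Fin d → ℝ) : Measurable (levyIntegrand ξ) := by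
  unfold levyIntegrand
  fun_prop (disch := exact measurableSet_eucNorm_lt_one)

lemma continuous_levyIntegrand_left (η : Fin d → ℝ) :
    Continuous fun ξ : Fin d → ℝ => levyIntegrand ξ η := by
  simp only [levyIntegrand, Set.indicator_apply, Set.mem_ofPred_eq]
  split_ifs <;> fun_prop

lemma IsLevyMeasure.integrable_min_sq {ν : Measure (Fin d → ℝ)} (hν : IsLevyMeasure ν) :
    Integrable (fun η : Fin d → ℝ => min (eucNorm η ^ 2) 1) ν := by
  refine ⟨((continuous_eucNorm.pow 2).min continuous_const).aestronglyMeasurable, ?_⟩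
  rw [hasFiniteIntegral_iff_ofReal (ae_of_all _ fun η => le_min (sq_nonneg _) zero_le_one),
    ← lintegral_add_compl _ measurableSet_eucNorm_lt_one]
  have hcompl : {η : Fin d → ℝ | eucNorm η < 1}ᶜ = {η | 1 ≤ eucNorm η} := by
    ext η; simp
  refine ENNReal.add_lt_top.2 ⟨?_, ?_⟩
  · refine lt_of_le_of_lt (lintegral_mono fun η => ?_) hν.2.1
    exact ENNReal.ofReal_le_ofReal (min_le_left _ _)
  · refine lt_of_le_of_lt (lintegral_mono fun η => ?_) (hcompl ▸ setLIntegral_one _ ▸ hν.2.2)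
    exact ENNReal.ofReal_le_one.2 (min_le_right _ _)

lemma continuous_levySymbol (α : Fin d → ℝ) (A : Matrix (Fin d) (Fin d) ℝ)
    {ν : Measure (Fin d → ℝ)} (hν : IsLevyMeasure ν) : Continuous (levySymbol α A ν) := by
  simp_rw [funext (levySymbol_eq α A ν)]
  refine Continuous.add (by fun_prop) (continuous_iff_continuousAt.2 fun ξ₀ => ?_)
  have hnear : ∀ᶠ ξ in nhds ξ₀, eucNorm ξ < eucNorm ξ₀ + 1 :=
    continuous_eucNorm.continuousAt.eventually_lt continuousAt_const (lt_add_one _)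
  refine continuousAt_of_dominated
    (Eventually.of_forall fun ξ => (measurable_levyIntegrand ξ).aestronglyMeasurable) ?_
    (hν.integrable_min_sq.const_mul (2 * ((eucNorm ξ₀ + 1) ^ 2 + 1)))
    (ae_of_all _ fun η => (continuous_levyIntegrand_left η).continuousAt)
  filter_upwards [hnear] with ξ hξ
  refine ae_of_all _ fun η => (norm_levyIntegrand_le ξ η).trans ?_
  have hξ0 := eucNorm_nonneg ξ
  gcongr

lemma expm_add (Z : Matrix (Fin d) (Fin d) ℝ) (t r : ℝ) :
    expm Z (t + r) = expm Z t * expm Z r := by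
  rw [expm, add_smul]
  exact Matrix.exp_add_of_commute _ _ (((Commute.refl Z).smul_left t).smul_right r)

lemma continuous_expm (Z : Matrix (Fin d) (Fin d) ℝ) : Continuous (expm Z) := by
  let _ : NormedRing (Matrix (Fin d) (Fin d) ℝ) := Matrix.linftyOpNormedRing
  let _ : NormedAlgebra ℝ (Matrix (Fin d) (Fin d) ℝ) := Matrix.linftyOpNormedAlgebra
  let _ : NormedAlgebra ℚ (Matrix (Fin d) (Fin d) ℝ) := NormedAlgebra.restrictScalars ℚ ℝ _
  exact NormedSpace.exp_continuous.comp (continuous_id.smul continuous_const)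

lemma charFun_map_transpose_mulVec (μ : Measure (Fin d → ℝ)) (M : Matrix (Fin d) (Fin d) ℝ)
    (k : Fin d → ℝ) : charFun (μ.map (Mᵀ *ᵥ ·)) k = charFun μ (M *ᵥ k) := by
  simp only [_root_.charFun]
  rw [integral_map (by fun_prop) (by fun_prop)]
  simp_rw [Matrix.mulVec_transpose, dotProduct_mulVec]

lemma charFun_mconv (μ ρ : Measure (Fin d → ℝ)) [IsFiniteMeasure μ] [IsFiniteMeasure ρ]
    (k : Fin d → ℝ) : charFun (mconv μ ρ) k = charFun μ k * charFun ρ k := by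
  change ∫ x, _ ∂(μ ∗ ρ) = _
  rw [integral_conv ((integrable_const (1 : ℝ)).mono (by fun_prop) (by simp))]
  simp [_root_.charFun, add_dotProduct, mul_add, Complex.exp_add, integral_const_mul,
    integral_mul_const]

lemma charFun_eq_charFun_map_toLp (μ : Measure (Fin d → ℝ)) (k : Fin d → ℝ) :
    charFun μ k = MeasureTheory.charFun (μ.map (WithLp.toLp 2)) (WithLp.toLp 2 k) := by
  rw [MeasureTheory.charFun_apply, integral_map (by fun_prop) (by fun_prop)]
  simp [_root_.charFun, PiLp.inner_apply, dotProduct, mul_comm]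

lemma measure_eq_of_charFun_eq {μ ρ : Measure (Fin d → ℝ)} [IsFiniteMeasure μ]
    [IsFiniteMeasure ρ] (h : ∀ k, charFun μ k = charFun ρ k) : μ = ρ := by
  have hLp : μ.map (WithLp.toLp 2) = ρ.map (WithLp.toLp 2) := by
    refine Measure.ext_of_charFun (funext fun k => ?_)
    simpa [charFun_eq_charFun_map_toLp] using h k.ofLp
  have hmap := congrArg (Measure.map WithLp.ofLp) hLp
  rw [Measure.map_map (by fun_prop) (by fun_prop), Measure.map_map (by fun_prop) (by fun_prop)]
    at hmap
  simpa only [Function.comp_def, WithLp.ofLp_toLp, Measure.map_id'] using hmap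

lemma mconv_apply_eq_lintegral (μ ρ : Measure (Fin d → ℝ)) [SFinite μ] [SFinite ρ]
    {C : Set (Fin d → ℝ)} (hC : MeasurableSet C) :
    mconv μ ρ C = ∫⁻ w, μ ((· + w) ⁻¹' C) ∂ρ := by
  change (μ ∗ ρ) C = _
  rw [Measure.conv, Measure.map_apply (by fun_prop) hC,
    Measure.prod_apply_symm (hC.preimage (by fun_prop))]
  rfl

lemma transpose_expm_mulVec_mulVec (Z : Matrix (Fin d) (Fin d) ℝ) (t r : ℝ)
    (x : Fin d → ℝ) : (expm Z t)ᵀ *ᵥ ((expm Z r)ᵀ *ᵥ x) = (expm Z (t + r))ᵀ *ᵥ x := by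
  rw [Matrix.mulVec_mulVec, ← Matrix.transpose_mul, ← expm_add, add_comm]

lemma mconv_map_transpose_expm_mulVec (Z : Matrix (Fin d) (Fin d) ℝ) (α : Fin d → ℝ)
    (A : Matrix (Fin d) (Fin d) ℝ) {ν : Measure (Fin d → ℝ)} (hν : IsLevyMeasure ν)
    (Q : ℝ → Measure (Fin d → ℝ)) (hQprob : ∀ t : ℝ, 0 ≤ t → IsProbabilityMeasure (Q t))
    (hQchar : ∀ t : ℝ, 0 ≤ t → ∀ k : Fin d → ℝ, charFun (Q t) k =
      Complex.exp (∫ τ in (0:ℝ)..t, levySymbol α A ν ((expm Z τ).mulVec k)))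
    {t r : ℝ} (ht : 0 ≤ t) (hr : 0 ≤ r) :
    mconv (Q t) ((Q r).map ((expm Z t)ᵀ *ᵥ ·)) = Q (t + r) := by
  have := hQprob t ht
  have := hQprob r hr
  have := hQprob (t + r) (add_nonneg ht hr)
  have : IsFiniteMeasure (mconv (Q t) ((Q r).map ((expm Z t)ᵀ *ᵥ ·))) :=
    inferInstanceAs (IsFiniteMeasure (_ ∗ _))
  refine measure_eq_of_charFun_eq fun k => ?_
  rw [charFun_mconv, charFun_map_transpose_mulVec, hQchar t ht, hQchar r hr,
    hQchar _ (add_nonneg ht hr), ← Complex.exp_add]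
  congr 1
  set ψ : ℝ → ℂ := fun τ => levySymbol α A ν (expm Z τ *ᵥ k)
  have hψ : Continuous ψ := (continuous_levySymbol α A hν).comp
    ((continuous_expm Z).matrix_mulVec continuous_const)
  have hshift : ∫ τ in (0:ℝ)..r, levySymbol α A ν (expm Z τ *ᵥ (expm Z t *ᵥ k)) =
      ∫ τ in t..t + r, ψ τ := by
    simp_rw [Matrix.mulVec_mulVec, ← expm_add]
    rw [intervalIntegral.integral_comp_add_right ψ t, zero_add, add_comm r t]
  rw [hshift, intervalIntegral.integral_add_adjacent_intervals (hψ.intervalIntegrable _ _)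
    (hψ.intervalIntegrable _ _)]

end

theorem stmt18_general (s : ℕ) (Z : Matrix (Fin s) (Fin s) ℝ)
    (α : Fin s → ℝ) (A : Matrix (Fin s) (Fin s) ℝ)
    (ν : Measure (Fin s → ℝ)) (hν : IsLevyMeasure ν)
    (Q : ℝ → Measure (Fin s → ℝ))
    (hQprob : ∀ t : ℝ, 0 ≤ t → IsProbabilityMeasure (Q t))
    (hQchar : ∀ t : ℝ, 0 ≤ t → ∀ k : Fin s → ℝ, charFun (Q t) k =
      Complex.exp (∫ τ in (0:ℝ)..t, levySymbol α A ν ((expm Z τ).mulVec k)))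
    (P : ℝ → (Fin s → ℝ) → Measure (Fin s → ℝ))
    (hP : ∀ (t : ℝ) (x : Fin s → ℝ),
      P t x = (Q t).map (fun y => y + (expm Z t)ᵀ.mulVec x)) :
    ∀ t r : ℝ, 0 ≤ t → 0 ≤ r → ∀ x : Fin s → ℝ,
      ∀ C : Set (Fin s → ℝ), MeasurableSet C →
        ∫⁻ y, P t y C ∂(P r x) = P (t + r) x C := by
  intro t r ht hr x C hC
  have := hQprob t ht
  have := hQprob r hr
  have hsection : Measurable fun c => Q t ((· + c) ⁻¹' C) :=
    MeasureTheory.measurable_measure_add_right (Q t) hC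
  have hPapply : ∀ t y, P t y C = Q t ((· + (expm Z t)ᵀ *ᵥ y) ⁻¹' C) := fun t y => by
    rw [hP, Measure.map_apply (by fun_prop) hC]
  calc ∫⁻ y, P t y C ∂(P r x)
      = ∫⁻ w, Q t ((· + (expm Z t)ᵀ *ᵥ (w + (expm Z r)ᵀ *ᵥ x)) ⁻¹' C) ∂(Q r) := by
        simp_rw [hPapply t]
        rw [hP r x]
        exact lintegral_map (hsection.comp (by fun_prop)) (by fun_prop)
    _ = ∫⁻ v, Q t ((· + v) ⁻¹' ((· + (expm Z (t + r))ᵀ *ᵥ x) ⁻¹' C))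
          ∂((Q r).map ((expm Z t)ᵀ *ᵥ ·)) := by
        rw [lintegral_map (MeasureTheory.measurable_measure_add_right (Q t)
          (hC.preimage (by fun_prop))) (by fun_prop)]
        simp_rw [Matrix.mulVec_add, transpose_expm_mulVec_mulVec, Set.preimage_preimage, add_assoc]
    _ = P (t + r) x C := by
        rw [← mconv_apply_eq_lintegral _ _ (hC.preimage (by fun_prop)),
          mconv_map_transpose_expm_mulVec Z α A hν Q hQprob hQchar ht hr, hPapply]

/-- Chapman–Kolmogorov identity for the transition probabilities
`P_t(·|x) = (translation by S_tᵀ x)_* Q_t` of the Ornstein–Uhlenbeck type semigroup. -/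
theorem stmt18 (s : ℕ) (hs : 0 < s) (Z : Matrix (Fin s) (Fin s) ℝ)
    (α : Fin s → ℝ) (A : Matrix (Fin s) (Fin s) ℝ) (hA : A.IsSymm) (hApsd : A.PosSemidef)
    (ν : Measure (Fin s → ℝ)) (hν : IsLevyMeasure ν)
    (Q : ℝ → Measure (Fin s → ℝ))
    (hQprob : ∀ t : ℝ, 0 ≤ t → IsProbabilityMeasure (Q t))
    (hQchar : ∀ t : ℝ, 0 ≤ t → ∀ k : Fin s → ℝ, charFun (Q t) k =
      Complex.exp (∫ τ in (0:ℝ)..t, levySymbol α A ν ((expm Z τ).mulVec k)))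
    (P : ℝ → (Fin s → ℝ) → Measure (Fin s → ℝ))
    (hP : ∀ (t : ℝ) (x : Fin s → ℝ),
      P t x = (Q t).map (fun y => y + (expm Z t)ᵀ.mulVec x)) :
    ∀ t r : ℝ, 0 ≤ t → 0 ≤ r → ∀ x : Fin s → ℝ,
      ∀ C : Set (Fin s → ℝ), MeasurableSet C →
        ∫⁻ y, P t y C ∂(P r x) = P (t + r) x C :=
  stmt18_general s Z α A ν hν Q hQprob hQchar P hP
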